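/- Let Z be a nonempty finite subset of V, let Z' ⊇ Z be a subset with V∖Z' finite, let a ∈ V, and let r ≥ 0. Then the number of ρ ∈ SF(Z') with ρ ∈ E_{r,Z}(a,Z') is at most the number of ρ ∈ SF(Z') with ρ ∈ D_r; equivalently, if ρ is sampled from the uniform measure OUSF(Z') on SF(Z'), then P[ρ ∈ E_{r,Z}(a,Z')] ≤ P[ρ ∈ D_r]. -/

import Mathlib

/-!
Run the rotor walk from `a` on `ρ ∈ SF(Z')` until it hits `Z'`, and let `σ` be the final rotor
configuration. Throughout the walk the rotors form a spanning forest rooted at `Z'` together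
with the current position, and the rotor path from any earlier position of the walk leads to the
current one without touching `Z'`; at the end this gives `σ ∈ SF(Z')`. If `ρ ∈ E_{r,Z}(a,Z')`,
the walk ends in `Z`, and the rotor path of `σ` from the far vertex visited at time `t₁` runs
into `Z`; the distance to `Z` drops by at most one per step along it, so it passes a vertex at
distance exactly `r`, i.e. `σ ∈ D_r`. Finally `ρ ↦ σ` is injective: a rotor step is injective on
states satisfying the invariant (the previous position is the predecessor of the current one on
the rotor path from `a`, or on the rotor cycle it closes), and no such step leads back to an
initial state.
-/

open Classical

universe u

variable {V : Type u}

/-- A rotor mechanism: for each vertex `x`, `τ x` restricts to a bijection of the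
neighbor set of `x` having a single orbit. -/
def IsMechanism (G : SimpleGraph V) (τ : V → V → V) : Prop :=
  ∀ x : V, Set.BijOn (τ x) (G.neighborSet x) (G.neighborSet x) ∧
    ∀ y ∈ G.neighborSet x, ∀ z ∈ G.neighborSet x, ∃ i : ℕ, (τ x)^[i] y = z

/-- One step of the rotor walk with sink `Z`; the walk freezes once it reaches `Z`. -/
noncomputable def rotorStep [DecidableEq V] (τ : V → V → V) (Z : Set V) :
    V × (V → V) → V × (V → V) := fun p =>
  if p.1 ∈ Z then p
  else (τ p.1 (p.2 p.1), Function.update p.2 p.1 (τ p.1 (p.2 p.1)))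

/-- The rotor walk with initial location `a`, sink `Z` and initial rotor
configuration `ρ`: position (first component) and rotor configuration
(second component) at time `t`. -/
noncomputable def rotorWalk [DecidableEq V] (τ : V → V → V) (Z : Set V)
    (a : V) (ρ : V → V) (t : ℕ) : V × (V → V) :=
  (rotorStep τ Z)^[t] (a, ρ)

/-- `Z`-oriented spanning forests of `G`, viewed as rotor configurations,
normalized to be the identity on `Z` (the values on `Z` are inconsequential). -/
def SFset (G : SimpleGraph V) (Z : Set V) : Set (V → V) :=
  {ρ | (∀ x ∉ Z, G.Adj x (ρ x)) ∧ (∀ x : V, ∃ ℓ : ℕ, ρ^[ℓ] x ∈ Z) ∧ ∀ x ∈ Z, ρ x = x}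

/-- The eventual value of an eventually-constant sequence. -/
noncomputable def eventualVal (f : ℕ → V) : V :=
  if h : ∃ t : ℕ, ∀ s : ℕ, t ≤ s → f s = f t then f h.choose else f 0

/-- The final rotor configuration `σ(a, Z; ρ)` of the rotor walk. -/
noncomputable def finalConfig [DecidableEq V] (τ : V → V → V) (Z : Set V)
    (a : V) (ρ : V → V) : V → V :=
  fun x => eventualVal fun t => (rotorWalk τ Z a ρ t).2 x

/-- `ξ_i(a_0, …, a_{i-1}, Z; ρ)`: the rotor configuration after `i` successive
walkers, started at `a_0, …, a_{i-1}`, have performed rotor walks with sink `Z`. -/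
noncomputable def xiConfig [DecidableEq V] (τ : V → V → V) (Z : Set V) (av : ℕ → V) :
    ℕ → (V → V) → (V → V)
  | 0, ρ => ρ
  | i + 1, ρ => finalConfig τ Z (av i) (xiConfig τ Z av i ρ)

/-- The set of times at which the rotor walk (run until it first reaches the
sink `Z`) is at a vertex of `W`; its cardinality is the odometer `u(a,Z;ρ)(W)`. -/
def visitTimes [DecidableEq V] (τ : V → V → V) (Z : Set V) (a : V) (ρ : V → V)
    (W : Set V) : Set ℕ :=
  {t | (rotorWalk τ Z a ρ t).1 ∈ W ∧ ∀ s < t, (rotorWalk τ Z a ρ s).1 ∉ Z}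

/-- The event `E_{r,W}(a,Z)`: the rotor walk with initial location `a` and sink `Z`
visits `W` some time after visiting a vertex at graph distance at least `r` from `W`. -/
def Eset [DecidableEq V] (G : SimpleGraph V) (τ : V → V → V) (r : ℕ) (W : Set V)
    (a : V) (Z : Set V) : Set (V → V) :=
  {ρ | ∃ t₁ t₂ : ℕ, t₁ < t₂ ∧ (∀ s < t₂, (rotorWalk τ Z a ρ s).1 ∉ Z) ∧
    (∀ w ∈ W, r ≤ G.dist w (rotorWalk τ Z a ρ t₁).1) ∧ (rotorWalk τ Z a ρ t₂).1 ∈ W}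

/-- The event `D_r` (relative to the set `Z`): there is an oriented path in `ρ`
from a vertex at graph distance exactly `r` from `Z` to a vertex of `Z`. -/
def Dset (G : SimpleGraph V) (Z : Set V) (r : ℕ) : Set (V → V) :=
  {ρ | ∃ x : V, ∃ ℓ : ℕ, (∀ w ∈ Z, r ≤ G.dist w x) ∧ (∃ w ∈ Z, G.dist w x = r) ∧
    ρ^[ℓ] x ∈ Z}

/-- The transition matrix `P_Z` of simple random walk on `G` killed upon hitting `Z`. -/
noncomputable def killedP (G : SimpleGraph V) [∀ v : V, Fintype (G.neighborSet v)]
    (Z : Set V) : Matrix {x : V // x ∉ Z} {x : V // x ∉ Z} ℝ :=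
  fun x y => if G.Adj x.1 y.1 then (1 : ℝ) / (G.degree x.1) else 0

/-- The Green function `((I - P_Z)⁻¹)_{a,x}` of simple random walk killed at `Z`,
as a function of a pair of vertices (zero if `V ∖ Z` is infinite or `a ∈ Z` or `x ∈ Z`). -/
noncomputable def greenFn (G : SimpleGraph V) [DecidableEq V]
    [∀ v : V, Fintype (G.neighborSet v)] (Z : Set V) (a x : V) : ℝ :=
  if h : ({y : V | y ∉ Z}).Finite ∧ a ∉ Z ∧ x ∉ Z then
    letI : Fintype {y : V // y ∉ Z} := h.1.fintype
    ((1 - killedP G Z)⁻¹) ⟨a, h.2.1⟩ ⟨x, h.2.2⟩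
  else 0

open Function Set

section Iterate

variable {α : Type*} {f g : α → α}

theorem iterate_eq_of_forall_lt_ne {x v : α} (h : ∀ u, u ≠ x → g u = f u) :
    ∀ {n : ℕ}, (∀ j < n, f^[j] v ≠ x) → g^[n] v = f^[n] v
  | 0, _ => rfl
  | n + 1, hn => by
    rw [iterate_succ_apply', iterate_succ_apply',
      iterate_eq_of_forall_lt_ne h fun j hj => hn j (by omega), h _ (hn n (by omega))]

theorem exists_iterate_mem_insert_of_eq_off {x v : α} {S : Set α} (h : ∀ u, u ≠ x → g u = f u)
    (hv : ∃ ℓ, f^[ℓ] v ∈ insert x S) : ∃ ℓ, g^[ℓ] v ∈ insert x S := by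
  refine ⟨Nat.find hv, ?_⟩
  rw [iterate_eq_of_forall_lt_ne h fun j hj hjx => Nat.find_min hv hj (Or.inl hjx)]
  exact Nat.find_spec hv

theorem exists_iterate_eq_of_eq_off {x w : α} {S : Set α} (h : ∀ u, u ≠ x → g u = f u)
    (hw : ∃ k, f^[k] w = x ∧ ∀ j < k, f^[j] w ∉ S) :
    ∃ k, g^[k] w = x ∧ ∀ j < k, g^[j] w ∉ insert x S := by
  obtain ⟨k, hk, hS⟩ := hw
  have hex : ∃ n, f^[n] w = x := ⟨k, hk⟩
  have hfirst : ∀ j < Nat.find hex, f^[j] w ∉ insert x S := by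
    rintro j hj (hjx | hjS)
    · exact Nat.find_min hex hj hjx
    · exact hS j (hj.trans_le (Nat.find_min' hex hk)) hjS
  have hagree : ∀ j ≤ Nat.find hex, g^[j] w = f^[j] w := fun j hj =>
    iterate_eq_of_forall_lt_ne h fun i hi hix => hfirst i (by omega) (Or.inl hix)
  exact ⟨Nat.find hex, (hagree _ le_rfl).trans (Nat.find_spec hex),
    fun j hj => hagree j hj.le ▸ hfirst j hj⟩

theorem forall_le_iterate_notMem {w x : α} {S : Set α} {k : ℕ} (hk : f^[k] w = x) (hx : x ∉ S)
    (h : ∀ j < k, f^[j] w ∉ insert x S) : ∀ j ≤ k, f^[j] w ∉ S := by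
  intro j hj
  rcases hj.lt_or_eq with hj | rfl
  · exact fun hS => h j hj (mem_insert_of_mem _ hS)
  · rwa [hk]

theorem Function.IsPeriodicPt.iterate_notMem {n : ℕ} {x : α} {S : Set α}
    (hx : IsPeriodicPt f n x) (hn : 0 < n) (h : ∀ j < n, f^[j] x ∉ S) (m : ℕ) : f^[m] x ∉ S :=
  hx.iterate_mod_apply m ▸ h _ (Nat.mod_lt m hn)

theorem iterate_eq_of_iterate_succ_eq_self {x : α} {m n : ℕ} (hm : f^[m + 1] x = x)
    (hn : f^[n + 1] x = x) : f^[m] x = f^[n] x := by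
  conv_lhs => rw [← hn]
  conv_rhs => rw [← hm]
  rw [← iterate_add_apply, ← iterate_add_apply, show m + (n + 1) = n + (m + 1) by omega]

theorem iterate_eq_of_first_mem {w : α} {S : Set α} {k₁ k₂ : ℕ}
    (h₁ : f^[k₁] w ∈ S) (h₁' : ∀ j < k₁, f^[j] w ∉ S)
    (h₂ : f^[k₂] w ∈ S) (h₂' : ∀ j < k₂, f^[j] w ∉ S) : f^[k₁] w = f^[k₂] w := by
  rcases lt_trichotomy k₁ k₂ with h | rfl | h
  · exact absurd h₁ (h₂' k₁ h)
  · rfl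
  · exact absurd h₂ (h₁' k₂ h)

theorem Set.InjOn.eq_of_iterate_eq {S : Set α} (hf : InjOn f S) {x y : α}
    (hx : ∀ s ∈ S, f s ≠ x) (hy : ∀ s ∈ S, f s ≠ y) :
    ∀ {m n : ℕ}, (∀ i < m, f^[i] x ∈ S) → (∀ j < n, f^[j] y ∈ S) → f^[m] x = f^[n] y →
      x = y := by
  intro m
  induction m with
  | zero =>
    rintro (_ | n) - hn h
    · exact h
    · rw [iterate_succ_apply'] at h
      exact absurd h.symm (hx _ (hn n n.lt_succ_self))
  | succ m ih =>
    rintro (_ | n) hm hn h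
    · rw [iterate_succ_apply'] at h
      exact absurd h (hy _ (hm m m.lt_succ_self))
    · rw [iterate_succ_apply', iterate_succ_apply'] at h
      exact ih (fun i hi => hm i (by omega)) (fun j hj => hn j (by omega))
        (hf (hm m m.lt_succ_self) (hn n n.lt_succ_self) h)

/-- For `k₁ < k₂` the point `σ x₁ = σ x₂` lies on a `σ`-cycle avoiding `S`. As it reaches
`S ∪ {x₁}` under `c`, which agrees with `σ` off `x₁`, the point `x₁` lies on that cycle too, so
`x₁` and `x₂` are both the predecessor of `σ x₁` on it. -/
theorem eq_of_apply_eq_of_eq_off {σ c : α → α} {S : Set α} {a x₁ x₂ : α} {k₁ k₂ : ℕ}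
    (hk : k₁ ≤ k₂) (hp₁ : σ^[k₁] a = x₁) (hp₂ : σ^[k₂] a = x₂) (hσ : σ x₁ = σ x₂)
    (hS : ∀ j ≤ k₂, σ^[j] a ∉ S) (hc : ∀ u, u ≠ x₁ → σ u = c u)
    (hreach : ∃ ℓ, c^[ℓ] (σ x₁) ∈ insert x₁ S) : x₁ = x₂ := by
  subst hp₁ hp₂
  rcases hk.lt_or_eq with hk | rfl
  swap
  · rfl
  have horbit : ∀ i, σ^[i] (σ (σ^[k₁] a)) = σ^[i + k₁ + 1] a := fun i => by
    rw [← iterate_succ_apply' σ k₁, ← iterate_add_apply]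
    rfl
  have hper : IsPeriodicPt σ (k₂ - k₁) (σ (σ^[k₁] a)) := by
    change σ^[k₂ - k₁] _ = _
    rw [horbit, show k₂ - k₁ + k₁ + 1 = k₂ + 1 by omega, iterate_succ_apply', hσ]
  have havoid := hper.iterate_notMem (by omega) fun j hj => by
    rw [horbit]; exact hS _ (by omega)
  obtain ⟨ℓ, hℓ⟩ := exists_iterate_mem_insert_of_eq_off hc hreach
  have hℓx : σ^[ℓ] (σ (σ^[k₁] a)) = σ^[k₁] a := (mem_insert_iff.1 hℓ).resolve_right (havoid ℓ)
  calc σ^[k₁] a = σ^[ℓ] (σ (σ^[k₁] a)) := hℓx.symm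
    _ = σ^[k₂ - k₁ - 1] (σ (σ^[k₁] a)) := by
      refine iterate_eq_of_iterate_succ_eq_self ?_ ?_
      · rw [iterate_succ_apply', hℓx]
      · rw [show k₂ - k₁ - 1 + 1 = k₂ - k₁ by omega]; exact hper
    _ = σ^[k₂] a := by rw [horbit, show k₂ - k₁ - 1 + k₁ + 1 = k₂ by omega]

end Iterate

theorem eventualVal_eq_of_forall_ge {f : ℕ → V} {T : ℕ} (h : ∀ s, T ≤ s → f s = f T) :
    eventualVal f = f T := by
  have hex : ∃ t, ∀ s, t ≤ s → f s = f t := ⟨T, h⟩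
  rw [eventualVal, dif_pos hex, ← hex.choose_spec _ (le_max_left _ T), h _ (le_max_right _ _)]

section Graph

variable {G : SimpleGraph V} {Z : Set V}

theorem SFset_finite [G.LocallyFinite] (hZ : Zᶜ.Finite) : (SFset G Z).Finite := by
  have : Finite ↥(Zᶜ) := hZ.to_subtype
  refine Set.Finite.of_finite_image (f := fun ρ (x : ↥(Zᶜ)) => ρ x)
    ((Set.Finite.pi fun x : ↥(Zᶜ) => (G.neighborSet x).toFinite).subset ?_) ?_
  · rintro _ ⟨ρ, hρ, rfl⟩ x -
    exact hρ.1 x x.2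
  · intro ρ₁ h₁ ρ₂ h₂ h
    funext v
    by_cases hv : v ∈ Z
    · rw [h₁.2.2 v hv, h₂.2.2 v hv]
    · exact congrFun h ⟨v, hv⟩

theorem exists_dist_eq_of_adj {W : Set V} {r k : ℕ} (u : ℕ → V)
    (hadj : ∀ j < k, G.Adj (u j) (u (j + 1))) (h₀ : ∀ w ∈ W, r ≤ G.dist w (u 0))
    (hk : u k ∈ W) :
    ∃ j ≤ k, (∀ w ∈ W, r ≤ G.dist w (u j)) ∧ ∃ w ∈ W, G.dist w (u j) = r := by
  rcases Nat.eq_zero_or_pos r with rfl | hr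
  · exact ⟨k, le_rfl, fun _ _ => Nat.zero_le _, u k, hk, SimpleGraph.dist_self⟩
  have hex : ∃ m, ¬ ∀ w ∈ W, r ≤ G.dist w (u m) :=
    ⟨k, fun h => by have := h _ hk; rw [SimpleGraph.dist_self] at this; omega⟩
  obtain ⟨_ | j, hm, hmin⟩ : ∃ m, (¬ ∀ w ∈ W, r ≤ G.dist w (u m)) ∧
      ∀ i < m, ∀ w ∈ W, r ≤ G.dist w (u i) :=
    ⟨Nat.find hex, Nat.find_spec hex, fun i hi => not_not.1 (Nat.find_min hex hi)⟩
  · exact absurd h₀ hm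
  have hjk : j < k := by
    by_contra! hkj
    have := hmin k (by omega) _ hk
    rw [SimpleGraph.dist_self] at this
    omega
  obtain ⟨w, hw, hlt⟩ : ∃ w ∈ W, G.dist w (u (j + 1)) < r := by simpa using hm
  have hstep : G.dist w (u j) ≤ G.dist w (u (j + 1)) + 1 := by
    simpa [SimpleGraph.dist_eq_one_iff_adj.2 (hadj j hjk).symm] using
      (hadj j hjk).symm.reachable.dist_triangle_right w
  exact ⟨j, hjk.le, hmin j j.lt_succ_self, w, hw,
    le_antisymm (by omega) (hmin j j.lt_succ_self w hw)⟩

structure RotorInvariant (G : SimpleGraph V) (Z : Set V) (w : V) (p : V × (V → V)) : Prop where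
  eq_self_of_mem : ∀ x ∈ Z, p.2 x = x
  adj_of_notMem : ∀ x ∉ Z, G.Adj x (p.2 x)
  exists_iterate_mem : ∀ v, ∃ ℓ, p.2^[ℓ] v ∈ insert p.1 Z
  exists_path : ∃ k, p.2^[k] w = p.1 ∧ ∀ j < k, p.2^[j] w ∉ Z

theorem rotorInvariant_start {ρ : V → V} (hρ : ρ ∈ SFset G Z) (a : V) :
    RotorInvariant G Z a (a, ρ) :=
  ⟨hρ.2.2, hρ.1, fun v => (hρ.2.1 v).imp fun _ h => mem_insert_of_mem _ h,
    ⟨0, rfl, fun _ h => absurd h (Nat.not_lt_zero _)⟩⟩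

theorem RotorInvariant.rebase {w : V} {p : V × (V → V)} (hp : RotorInvariant G Z w p) :
    RotorInvariant G Z p.1 p :=
  { hp with exists_path := ⟨0, rfl, fun _ h => absurd h (Nat.not_lt_zero _)⟩ }

end Graph

section Rotor

variable [DecidableEq V] {G : SimpleGraph V} {τ : V → V → V} {Z : Set V}

def IsHittingTime (τ : V → V → V) (Z : Set V) (a : V) (ρ : V → V) (T : ℕ) : Prop :=
  (rotorWalk τ Z a ρ T).1 ∈ Z ∧ ∀ s < T, (rotorWalk τ Z a ρ s).1 ∉ Z

theorem rotorStep_of_mem {p : V × (V → V)} (hp : p.1 ∈ Z) : rotorStep τ Z p = p :=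
  if_pos hp

theorem rotorStep_of_notMem {x : V} {c : V → V} (hx : x ∉ Z) :
    rotorStep τ Z (x, c) = (τ x (c x), update c x (τ x (c x))) :=
  if_neg hx

theorem rotorWalk_succ (a : V) (ρ : V → V) (t : ℕ) :
    rotorWalk τ Z a ρ (t + 1) = rotorStep τ Z (rotorWalk τ Z a ρ t) :=
  iterate_succ_apply' _ _ _

theorem iterate_rotorStep_rotorWalk (a : V) (ρ : V → V) (n t : ℕ) :
    (rotorStep τ Z)^[n] (rotorWalk τ Z a ρ t) = rotorWalk τ Z a ρ (n + t) :=
  (iterate_add_apply _ _ _ _).symm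

theorem rotorWalk_eq_of_fst_mem {a : V} {ρ : V → V} {T : ℕ} (hT : (rotorWalk τ Z a ρ T).1 ∈ Z)
    {s : ℕ} (hs : T ≤ s) : rotorWalk τ Z a ρ s = rotorWalk τ Z a ρ T := by
  induction s, hs using Nat.le_induction with
  | base => rfl
  | succ s _ ih => rw [rotorWalk_succ, ih, rotorStep_of_mem hT]

theorem finalConfig_eq_of_fst_mem {a : V} {ρ : V → V} {T : ℕ}
    (hT : (rotorWalk τ Z a ρ T).1 ∈ Z) : finalConfig τ Z a ρ = (rotorWalk τ Z a ρ T).2 :=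
  funext fun _ => eventualVal_eq_of_forall_ge fun _ hs => by rw [rotorWalk_eq_of_fst_mem hT hs]

namespace RotorInvariant

variable {w : V} {p : V × (V → V)}

theorem step (hτ : IsMechanism G τ) (hp : RotorInvariant G Z w p) (hZ : p.1 ∉ Z) :
    RotorInvariant G Z w (rotorStep τ Z p) := by
  obtain ⟨x, c⟩ := p
  obtain ⟨hfix, hadj, hreach, hpath⟩ := hp
  dsimp only at hZ hfix hadj hreach hpath
  rw [rotorStep_of_notMem hZ]
  have hoff : ∀ u, u ≠ x → update c x (τ x (c x)) u = c u := fun u hu => update_of_ne hu _ _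
  refine ⟨fun z hz => ?_, fun v hv => ?_, fun v => ?_, ?_⟩ <;> dsimp only
  · rw [hoff z (ne_of_mem_of_not_mem hz hZ), hfix z hz]
  · rcases eq_or_ne v x with rfl | hvx
    · rw [update_self]; exact (hτ v).1.mapsTo (hadj v hv)
    · rw [hoff v hvx]; exact hadj v hv
  · obtain ⟨ℓ, hx | hZℓ⟩ := exists_iterate_mem_insert_of_eq_off hoff (hreach v)
    · exact ⟨ℓ + 1, by rw [iterate_succ_apply', hx, update_self]; exact mem_insert _ _⟩
    · exact ⟨ℓ, mem_insert_of_mem _ hZℓ⟩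
  · obtain ⟨k, hk, hav⟩ := exists_iterate_eq_of_eq_off hoff hpath
    exact ⟨k + 1, by rw [iterate_succ_apply', hk, update_self],
      fun j hj => forall_le_iterate_notMem hk hZ hav j (Nat.lt_succ_iff.1 hj)⟩

theorem iterate (hτ : IsMechanism G τ) (hp : RotorInvariant G Z w p) :
    ∀ n, (∀ m < n, ((rotorStep τ Z)^[m] p).1 ∉ Z) →
      RotorInvariant G Z w ((rotorStep τ Z)^[n] p)
  | 0, _ => hp
  | n + 1, h => by
    rw [iterate_succ_apply']
    exact (hp.iterate hτ n fun m hm => h m (by omega)).step hτ (h n (by omega))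

end RotorInvariant

theorem rotorInvariant_rotorWalk (hτ : IsMechanism G τ) {a : V} {ρ : V → V}
    (hρ : ρ ∈ SFset G Z) {t₀ t : ℕ} (ht : t₀ ≤ t) (hZ : ∀ s < t, (rotorWalk τ Z a ρ s).1 ∉ Z) :
    RotorInvariant G Z (rotorWalk τ Z a ρ t₀).1 (rotorWalk τ Z a ρ t) := by
  have h₀ : RotorInvariant G Z a (rotorWalk τ Z a ρ t₀) :=
    (rotorInvariant_start hρ a).iterate hτ t₀ fun m hm => hZ m (by omega)
  have h := h₀.rebase.iterate hτ (t - t₀) fun m hm => by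
    rw [iterate_rotorStep_rotorWalk]; exact hZ _ (by omega)
  rwa [iterate_rotorStep_rotorWalk, Nat.sub_add_cancel ht] at h

theorem rotorStep_injOn (hτ : IsMechanism G τ) (a : V) :
    InjOn (rotorStep τ Z) {p | RotorInvariant G Z a p ∧ p.1 ∉ Z} := by
  rintro ⟨x₁, c₁⟩ ⟨h₁, hx₁⟩ ⟨x₂, c₂⟩ ⟨h₂, hx₂⟩ heq
  dsimp only at hx₁ hx₂
  rw [rotorStep_of_notMem hx₁, rotorStep_of_notMem hx₂, Prod.mk.injEq] at heq
  obtain ⟨hy, hσ⟩ := heq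
  have hoff₁ : ∀ u, u ≠ x₁ → update c₁ x₁ (τ x₁ (c₁ x₁)) u = c₁ u :=
    fun u hu => update_of_ne hu _ _
  have hoff₂ : ∀ u, u ≠ x₂ → update c₁ x₁ (τ x₁ (c₁ x₁)) u = c₂ u :=
    fun u hu => by rw [hσ, update_of_ne hu]
  have hσx : update c₁ x₁ (τ x₁ (c₁ x₁)) x₁ = update c₁ x₁ (τ x₁ (c₁ x₁)) x₂ := by
    rw [update_self, hσ, update_self, hy]
  obtain ⟨k₁, hp₁, hav₁⟩ := exists_iterate_eq_of_eq_off hoff₁ h₁.exists_path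
  obtain ⟨k₂, hp₂, hav₂⟩ := exists_iterate_eq_of_eq_off hoff₂ h₂.exists_path
  have hx : x₁ = x₂ := by
    rcases le_total k₁ k₂ with hk | hk
    · exact eq_of_apply_eq_of_eq_off hk hp₁ hp₂ hσx (forall_le_iterate_notMem hp₂ hx₂ hav₂)
        hoff₁ (h₁.exists_iterate_mem _)
    · exact (eq_of_apply_eq_of_eq_off hk hp₂ hp₁ hσx.symm (forall_le_iterate_notMem hp₁ hx₁ hav₁)
        hoff₂ (h₂.exists_iterate_mem _)).symm
  subst hx
  have hc : c₁ x₁ = c₂ x₁ :=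
    (hτ x₁).1.injOn (h₁.adj_of_notMem x₁ hx₁) (h₂.adj_of_notMem x₁ hx₂) hy
  congr 1
  funext v
  rcases eq_or_ne v x₁ with rfl | hv
  · exact hc
  · rw [← hoff₁ v hv, hoff₂ v hv]

theorem rotorStep_ne_of_exists_iterate_mem {a : V} {ρ : V → V} (hρ : ∃ ℓ, ρ^[ℓ] a ∈ Z)
    {p : V × (V → V)} (hp : RotorInvariant G Z a p) (hZ : p.1 ∉ Z) :
    rotorStep τ Z p ≠ (a, ρ) := by
  obtain ⟨x, c⟩ := p
  dsimp only at hZ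
  rw [rotorStep_of_notMem hZ, Ne, Prod.mk.injEq]
  rintro ⟨hya, rfl⟩
  have hoff : ∀ u, u ≠ x → update c x (τ x (c x)) u = c u := fun u hu => update_of_ne hu _ _
  obtain ⟨k, hk, hav⟩ := exists_iterate_eq_of_eq_off hoff hp.exists_path
  -- the rotor path from `a` now closes up into a cycle through `x` avoiding `Z`
  have hper : IsPeriodicPt (update c x (τ x (c x))) (k + 1) a := by
    change _^[k + 1] a = a
    rw [iterate_succ_apply', hk, update_self, hya]
  obtain ⟨ℓ, hℓ⟩ := hρ
  exact hper.iterate_notMem k.succ_pos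
    (fun j hj => forall_le_iterate_notMem hk hZ hav j (Nat.lt_succ_iff.1 hj)) ℓ hℓ

theorem finalConfig_mem_SFset (hτ : IsMechanism G τ) {a : V} {ρ : V → V} {T : ℕ}
    (hρ : ρ ∈ SFset G Z) (hT : IsHittingTime τ Z a ρ T) : finalConfig τ Z a ρ ∈ SFset G Z := by
  have h : RotorInvariant G Z a (rotorWalk τ Z a ρ T) :=
    rotorInvariant_rotorWalk hτ hρ (Nat.zero_le T) hT.2
  rw [finalConfig_eq_of_fst_mem hT.1]
  refine ⟨h.adj_of_notMem, fun v => ?_, h.eq_self_of_mem⟩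
  simpa only [insert_eq_of_mem hT.1] using h.exists_iterate_mem v

theorem finalConfig_injOn (hτ : IsMechanism G τ) (a : V) :
    InjOn (finalConfig τ Z a) {ρ | ρ ∈ SFset G Z ∧ ∃ T, IsHittingTime τ Z a ρ T} := by
  rintro ρ₁ ⟨hρ₁, T₁, hT₁⟩ ρ₂ ⟨hρ₂, T₂, hT₂⟩ heq
  rw [finalConfig_eq_of_fst_mem hT₁.1, finalConfig_eq_of_fst_mem hT₂.1] at heq
  have hinv : ∀ ρ ∈ SFset G Z, ∀ T, IsHittingTime τ Z a ρ T → ∀ t ≤ T,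
      RotorInvariant G Z a (rotorWalk τ Z a ρ t) := fun ρ hρ T hT t ht =>
    rotorInvariant_rotorWalk hτ hρ (Nat.zero_le t) fun s hs => hT.2 s (by omega)
  have hpos : (rotorWalk τ Z a ρ₁ T₁).1 = (rotorWalk τ Z a ρ₂ T₂).1 := by
    obtain ⟨k₁, hk₁, hav₁⟩ := (hinv ρ₁ hρ₁ T₁ hT₁ T₁ le_rfl).exists_path
    obtain ⟨k₂, hk₂, hav₂⟩ := (hinv ρ₂ hρ₂ T₂ hT₂ T₂ le_rfl).exists_path
    rw [heq] at hk₁ hav₁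
    rw [← hk₁, ← hk₂]
    exact iterate_eq_of_first_mem (hk₁ ▸ hT₁.1) hav₁ (hk₂ ▸ hT₂.1) hav₂
  have hS : ∀ ρ ∈ SFset G Z, ∀ T, IsHittingTime τ Z a ρ T → ∀ i < T,
      (rotorStep τ Z)^[i] (a, ρ) ∈ {p | RotorInvariant G Z a p ∧ p.1 ∉ Z} :=
    fun ρ hρ T hT i hi => ⟨hinv ρ hρ T hT i hi.le, hT.2 i hi⟩
  have hstart := (rotorStep_injOn hτ a).eq_of_iterate_eq
    (fun p hp => rotorStep_ne_of_exists_iterate_mem (hρ₁.2.1 a) hp.1 hp.2)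
    (fun p hp => rotorStep_ne_of_exists_iterate_mem (hρ₂.2.1 a) hp.1 hp.2)
    (hS ρ₁ hρ₁ T₁ hT₁) (hS ρ₂ hρ₂ T₂ hT₂) (Prod.ext hpos heq)
  exact congrArg Prod.snd hstart

theorem exists_isHittingTime_of_mem_Eset {W : Set V} {r : ℕ} {a : V} {ρ : V → V} (hW : W ⊆ Z)
    (h : ρ ∈ Eset G τ r W a Z) : ∃ T, IsHittingTime τ Z a ρ T :=
  let ⟨_, T, _, hZ, _, hT⟩ := h
  ⟨T, hW hT, hZ⟩

theorem finalConfig_mem_Dset (hτ : IsMechanism G τ) {W : Set V} {r : ℕ} {a : V} {ρ : V → V}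
    (hρ : ρ ∈ SFset G Z) (hW : W ⊆ Z) (hE : ρ ∈ Eset G τ r W a Z) :
    finalConfig τ Z a ρ ∈ Dset G W r := by
  obtain ⟨t₁, T, ht, hZ, hfar, hT⟩ := hE
  have h := rotorInvariant_rotorWalk hτ hρ ht.le hZ
  rw [finalConfig_eq_of_fst_mem (hW hT)]
  obtain ⟨k, hk, hav⟩ := h.exists_path
  obtain ⟨j, hj, hfar', hdist⟩ :=
    exists_dist_eq_of_adj (fun i => (rotorWalk τ Z a ρ T).2^[i] (rotorWalk τ Z a ρ t₁).1)
      (fun i hi => by simpa only [iterate_succ_apply'] using h.adj_of_notMem _ (hav i hi))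
      hfar (show _ ∈ W by rwa [hk])
  exact ⟨_, k - j, hfar', hdist, by rwa [← iterate_add_apply, Nat.sub_add_cancel hj, hk]⟩

end Rotor

/-- If `Z` is nonempty finite and `Z ⊆ Z'` with `V ∖ Z'` finite, then
the number of `ρ ∈ SF(Z')` lying in `E_{r,Z}(a,Z')` is at most the number of
`ρ ∈ SF(Z')` lying in `D_r`; equivalently, for `ρ` uniform on `SF(Z')`,
`P[ρ ∈ E_{r,Z}(a,Z')] ≤ P[ρ ∈ D_r]`. -/
theorem stmt11 {V : Type u} [DecidableEq V] (G : SimpleGraph V) (hconn : G.Connected)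
    [∀ v : V, Fintype (G.neighborSet v)] (τ : V → V → V) (hτ : IsMechanism G τ)
    (Z : Set V) (hZ : Z.Nonempty) (hZfin : Z.Finite)
    (Z' : Set V) (hsub : Z ⊆ Z') (hZ'fin : (Z'ᶜ : Set V).Finite)
    (a : V) (r : ℕ) :
    (SFset G Z' ∩ Eset G τ r Z a Z').ncard ≤ (SFset G Z' ∩ Dset G Z r).ncard := by
  have hE : SFset G Z' ∩ Eset G τ r Z a Z' ⊆
      {ρ | ρ ∈ SFset G Z' ∧ ∃ T, IsHittingTime τ Z' a ρ T} :=
    fun ρ hρ => ⟨hρ.1, exists_isHittingTime_of_mem_Eset hsub hρ.2⟩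
  refine Set.ncard_le_ncard_of_injOn (finalConfig τ Z' a) (fun ρ hρ => ?_)
    ((finalConfig_injOn hτ a).mono hE) ((SFset_finite hZ'fin).inter_of_left _)
  obtain ⟨T, hT⟩ := (hE hρ).2
  exact ⟨finalConfig_mem_SFset hτ hρ.1 hT, finalConfig_mem_Dset hτ hρ.1 hsub hρ.2⟩
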